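/- arXiv:1412.3080 — 7 statements merged into one kernel-verified Lean document; each statement's English description precedes it below -/
import Mathlib

section
/- Let r be a positive integer and let x_1,...,x_s, y_1,...,y_s, X, Y be real numbers such that r < x_i ≤ y_i for all i, Y ≥ max(x_1,...,x_s), and X·∏x_i < Y·∏y_i. Then (X−r)·∏(x_i−r) < (Y−r)·∏(y_i−r). -/
/-- The Schemmel totient function of order `r` (multiplicative, with
`S r (p^a) = p^(a-1) * (p - r)`; note `p - r = 0` in `ℕ` when `p ≤ r`). -/
def S (r n : ℕ) : ℕ := ∏ q ∈ n.primeFactors, q ^ (n.factorization q - 1) * (q - r)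

/-- `b r` is the number of primes `≤ r`. -/
def b (r : ℕ) : ℕ := ((Finset.range (r + 1)).filter Nat.Prime).card

/-- `p i` is the `i`-th prime (`p 1 = 2`, `p 2 = 3`, ...). -/
noncomputable def p (i : ℕ) : ℕ := Nat.nth Nat.Prime (i - 1)

/-- `n` is a sparsely Schemmel totient number of order `r`. -/
def SST (r n : ℕ) : Prop := 0 < S r n ∧ ∀ m : ℕ, n < m → 0 < S r m → S r n < S r m

/-- Jacobsthal function: the smallest `a` such that every `a` consecutive
integers contain one coprime to `N`. -/
noncomputable def J (N : ℕ) : ℕ := sInf {a : ℕ | ∀ x : ℕ, ∃ y ∈ Finset.Ico x (x + a), Nat.Coprime y N}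

/-- `Pk k n` is the `k`-th largest prime divisor of `n` (or `0` if `ω(n) < k`). -/
def Pk (k n : ℕ) : ℕ := ((n.primeFactors.sort (· ≤ ·)).reverse).getD (k - 1) 0

/-- `Qk r k n` is the `k`-th smallest prime greater than `r` not dividing `n`. -/
noncomputable def Qk (r k n : ℕ) : ℕ := Nat.nth (fun q : ℕ => q.Prime ∧ r < q ∧ ¬ q ∣ n) (k - 1)

/-- `Rn n` is `n` divided by the product of its distinct prime factors. -/
def Rn (n : ℕ) : ℕ := n / ∏ q ∈ n.primeFactors, q

/-!
With `P = ∏ xᵢ`, `Q = ∏ yᵢ`, `P' = ∏ (xᵢ - r)`, `Q' = ∏ (yᵢ - r)`, the hypothesis gives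
`(X - r) P' P < (Y Q - r P) P'`, so it suffices that `(Y Q - r P) P' ≤ (Y - r) Q' P`.
This is proved one coordinate at a time for a general weight pair `(Z, W)` in place of `(Y, 1)`:
removing the coordinate `i` turns `(Z, W)` into `(Z yᵢ, W xᵢ)`, and the single step costs
`r (yᵢ - xᵢ) (Z - W xᵢ) ≥ 0`, which is where `Y ≥ xᵢ` enters.
-/

open Finset

lemma mul_sub_mul_mul_sub_le {r x y Z W : ℝ} (hr : 0 ≤ r) (hxy : x ≤ y) (hZ : x * W ≤ Z) :
    (Z * y - r * W * x) * (x - r) ≤ (Z - r * W) * (y - r) * x := by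
  have hdefect : (Z - r * W) * (y - r) * x - (Z * y - r * W * x) * (x - r) =
      r * (y - x) * (Z - x * W) := by ring
  have : 0 ≤ r * (y - x) * (Z - x * W) :=
    mul_nonneg (mul_nonneg hr (sub_nonneg.2 hxy)) (sub_nonneg.2 hZ)
  linarith

lemma mul_prod_sub_mul_prod_mul_prod_sub_le {ι : Type*} [DecidableEq ι] {r : ℝ} (hr : 0 ≤ r)
    (s : Finset ι) {x y : ι → ℝ} (hx : ∀ i ∈ s, r ≤ x i) (hxy : ∀ i ∈ s, x i ≤ y i)
    {Z W : ℝ} (hW : 0 ≤ W) (hZ : ∀ i ∈ s, x i * W ≤ Z) :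
    (Z * ∏ i ∈ s, y i - r * W * ∏ i ∈ s, x i) * ∏ i ∈ s, (x i - r) ≤
      (Z - r * W) * (∏ i ∈ s, (y i - r)) * ∏ i ∈ s, x i := by
  induction s using Finset.induction_on generalizing Z W with
  | empty => simp
  | insert a s ha ih =>
    simp only [mem_insert, forall_eq_or_imp] at hx hxy hZ
    have hxa : 0 ≤ x a := hr.trans hx.1
    have hZ' : ∀ i ∈ s, x i * (W * x a) ≤ Z * y a := fun i hi => by
      have hZ0 : 0 ≤ Z := (mul_nonneg (hr.trans (hx.2 i hi)) hW).trans (hZ.2 i hi)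
      calc x i * (W * x a) = x i * W * x a := by ring
        _ ≤ Z * x a := mul_le_mul_of_nonneg_right (hZ.2 i hi) hxa
        _ ≤ Z * y a := mul_le_mul_of_nonneg_left hxy.1 hZ0
    have hrest := ih hx.2 hxy.2 (mul_nonneg hW hxa) hZ'
    have hstep := mul_sub_mul_mul_sub_le hr hxy.1 hZ.1
    have hA : 0 ≤ ∏ i ∈ s, x i := prod_nonneg fun i hi => hr.trans (hx.2 i hi)
    have hD : 0 ≤ ∏ i ∈ s, (y i - r) :=
      prod_nonneg fun i hi => sub_nonneg.2 ((hx.2 i hi).trans (hxy.2 i hi))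
    rw [prod_insert ha, prod_insert ha, prod_insert ha, prod_insert ha]
    calc (Z * (y a * ∏ i ∈ s, y i) - r * W * (x a * ∏ i ∈ s, x i)) *
          ((x a - r) * ∏ i ∈ s, (x i - r))
        = ((Z * y a * ∏ i ∈ s, y i - r * (W * x a) * ∏ i ∈ s, x i) *
            ∏ i ∈ s, (x i - r)) * (x a - r) := by ring
      _ ≤ ((Z * y a - r * (W * x a)) * (∏ i ∈ s, (y i - r)) * ∏ i ∈ s, x i) * (x a - r) :=
          mul_le_mul_of_nonneg_right hrest (sub_nonneg.2 hx.1)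
      _ = ((Z * y a - r * W * x a) * (x a - r)) * ((∏ i ∈ s, (y i - r)) * ∏ i ∈ s, x i) := by
          ring
      _ ≤ ((Z - r * W) * (y a - r) * x a) * ((∏ i ∈ s, (y i - r)) * ∏ i ∈ s, x i) :=
          mul_le_mul_of_nonneg_right hstep (mul_nonneg hD hA)
      _ = (Z - r * W) * ((y a - r) * ∏ i ∈ s, (y i - r)) * (x a * ∏ i ∈ s, x i) := by ring

theorem stmt0_general (r : ℕ) (s : ℕ)
    (x y : Fin s → ℝ) (X Y : ℝ)
    (hxy : ∀ i, (r : ℝ) < x i ∧ x i ≤ y i)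
    (hY : ∀ i, x i ≤ Y)
    (h : X * ∏ i, x i < Y * ∏ i, y i) :
    (X - r) * ∏ i, (x i - r) < (Y - r) * ∏ i, (y i - r) := by
  have hr : (0 : ℝ) ≤ r := Nat.cast_nonneg r
  have hP : 0 < ∏ i, x i := prod_pos fun i _ => hr.trans_lt (hxy i).1
  have hP' : 0 < ∏ i, (x i - r) := prod_pos fun i _ => sub_pos.2 (hxy i).1
  have key := mul_prod_sub_mul_prod_mul_prod_sub_le hr univ (fun i _ => (hxy i).1.le)
    (fun i _ => (hxy i).2) zero_le_one (fun i _ => (mul_one (x i)).trans_le (hY i))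
  simp only [mul_one] at key
  refine lt_of_mul_lt_mul_right ?_ hP.le
  calc (X - r) * (∏ i, (x i - r)) * ∏ i, x i
      = (X * ∏ i, x i - r * ∏ i, x i) * ∏ i, (x i - r) := by ring
    _ < (Y * ∏ i, y i - r * ∏ i, x i) * ∏ i, (x i - r) :=
        mul_lt_mul_of_pos_right (sub_lt_sub_right h _) hP'
    _ ≤ (Y - r) * (∏ i, (y i - r)) * ∏ i, x i := key

theorem stmt0 (r : ℕ) (hr : 0 < r) (s : ℕ) (hs : 1 ≤ s)
    (x y : Fin s → ℝ) (X Y : ℝ)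
    (hxy : ∀ i, (r : ℝ) < x i ∧ x i ≤ y i)
    (hY : ∀ i, x i ≤ Y)
    (h : X * ∏ i, x i < Y * ∏ i, y i) :
    (X - r) * ∏ i, (x i - r) < (Y - r) * ∏ i, (y i - r) :=
  stmt0_general r s x y X Y hxy hY h
end

section
/- For any positive integer r and any n with S_r(n) > 0, S_r(n) ≥ ∏_{i=1}^{ω(n)} (p_{b(r)+i} − r), where ω(n) is the number of distinct prime factors of n. -/
/-!
If `S r n > 0` then every prime factor `q` of `n` exceeds `r`, and dropping the prime-power
factors gives `S r n ≥ ∏_{q ∣ n} (q - r)`. Listing the prime factors of `n` increasingly, the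
`i`-th of them (from `0`) is a prime beyond the `b r` primes `≤ r` and beyond `i` smaller ones,
so it is at least `p (b r + i + 1)`.
-/

open Finset

namespace Nat

theorem prod_range_nth_le_prod {M : Type*} [CommMonoid M] [PartialOrder M] [IsOrderedMonoid M]
    {P : ℕ → Prop} [DecidablePred P] {f : ℕ → M} (hf : Monotone f) (T : Finset ℕ)
    (hP : ∀ q ∈ T, P q) {B : ℕ} (hB : ∀ q ∈ T, B ≤ count P q) :
    ∏ i ∈ range #T, f (nth P (B + i)) ≤ ∏ q ∈ T, f q := by
  induction T using Finset.induction_on_min generalizing B with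
  | empty => simp
  | insert a s has ih =>
    have ha : P a := hP a (mem_insert_self a s)
    have hnth : nth P B ≤ a :=
      Nat.lt_succ_iff.mp <| nth_lt_of_lt_count <|
        (hB a (mem_insert_self a s)).trans_lt (count_lt_count_succ_iff.2 ha)
    have hs : ∏ i ∈ range #s, f (nth P (B + 1 + i)) ≤ ∏ q ∈ s, f q :=
      ih (fun q hq => hP q (mem_insert_of_mem hq)) fun q hq =>
        (hB a (mem_insert_self a s)).trans_lt (count_strict_mono ha (has q hq))
    have has' : a ∉ s := fun h => (has a h).false
    rw [card_insert_of_notMem has', prod_range_succ', prod_insert has', mul_comm]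
    simp only [add_zero, add_assoc, add_comm 1] at hs ⊢
    exact mul_le_mul' (hf hnth) hs

end Nat

theorem b_eq_count (r : ℕ) : b r = Nat.count Nat.Prime (r + 1) := by
  rw [b, Nat.count_eq_card_filter_range]

theorem lt_of_mem_primeFactors_of_S_pos {r n q : ℕ} (hn : 0 < S r n)
    (hq : q ∈ n.primeFactors) : r < q :=
  Nat.lt_of_sub_ne_zero (right_ne_zero_of_mul (prod_ne_zero_iff.mp hn.ne' q hq))

theorem prod_primeFactors_sub_le_S (r n : ℕ) : ∏ q ∈ n.primeFactors, (q - r) ≤ S r n :=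
  prod_le_prod' fun _ hq =>
    Nat.le_mul_of_pos_left _ (pow_pos (Nat.prime_of_mem_primeFactors hq).pos _)

theorem stmt2_general (r n : ℕ) (hn : 0 < S r n) :
    ∏ i ∈ Finset.range n.primeFactors.card, (p (b r + i + 1) - r) ≤ S r n := by
  have hcount : ∀ q ∈ n.primeFactors, b r ≤ Nat.count Nat.Prime q := fun _ hq =>
    b_eq_count r ▸ Nat.count_monotone _ (lt_of_mem_primeFactors_of_S_pos hn hq)
  calc ∏ i ∈ range #n.primeFactors, (p (b r + i + 1) - r)
      = ∏ i ∈ range #n.primeFactors, (Nat.nth Nat.Prime (b r + i) - r) := by simp [p]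
    _ ≤ ∏ q ∈ n.primeFactors, (q - r) :=
        Nat.prod_range_nth_le_prod (fun _ _ h => Nat.sub_le_sub_right h r) _
          (fun _ => Nat.prime_of_mem_primeFactors) hcount
    _ ≤ S r n := prod_primeFactors_sub_le_S r n

theorem stmt2 (r n : ℕ) (hr : 0 < r) (hn : 0 < S r n) :
    ∏ i ∈ Finset.range n.primeFactors.card, (p (b r + i + 1) - r) ≤ S r n :=
  stmt2_general r n hn
end

section
/- For every positive integer j not in {1, 2, 4}, the ratio of consecutive primes satisfies p_{j+1}/p_j ≤ 7/5. -/
/-! Chebyshev's method. Writing `T x = log ⌊x⌋!`, the combination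
`T x - T (x/2) - T (x/3) - T (x/5) + T (x/30)` equals `∑ Λ d · w ⌊x/d⌋`, where the weight `w`
is `30`-periodic with values in `{0, 1}` and equals `1` on `1, …, 5`; so it lies between
`ψ x - ψ (x/6)` and `ψ x`, while Stirling's formula evaluates it as `A x + O(log x)` with
`A ≈ 0.9213`. Hence `A x - O(log x) ≤ ψ x ≤ (6/5) A x + O(√x)`, and for large `N` the interval
`(N, 7N/5]` carries `ψ`-mass about `A N / 5`, more than the `O(√N log N)` that proper prime powers
can contribute: it contains a prime. Below `1.2 · 10⁷` an explicit chain of primes, each at most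
`7/5` times the previous one, does the job; `p 1 = 2`, `p 2 = 3` and `p 4 = 7` are the
exceptions. -/

open Real Finset
open scoped Nat Chebyshev ArithmeticFunction.vonMangoldt

theorem mul_log_sub_self_monotoneOn : MonotoneOn (fun x : ℝ => x * log x - x) (Set.Ici 1) := by
  intro a (ha : 1 ≤ a) b _ hab
  have hb : 0 < b := by linarith
  have h := one_sub_inv_le_log_of_pos (div_pos hb (by linarith : (0 : ℝ) < a))
  rw [log_div hb.ne' (by linarith), inv_div] at h
  have : b - a ≤ b * (log b - log a) := by
    calc b - a = b * (1 - a / b) := by field_simp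
      _ ≤ b * (log b - log a) := mul_le_mul_of_nonneg_left h hb.le
  nlinarith [log_nonneg ha]

theorem mul_log_sub_self_sub_le {a b : ℝ} (ha : 0 < a) (hab : a ≤ b) :
    b * log b - b - (a * log a - a) ≤ (b - a) * log b := by
  have h := log_le_sub_one_of_pos (div_pos (ha.trans_le hab) ha)
  rw [log_div (ha.trans_le hab).ne' ha.ne'] at h
  have : a * (log b - log a) ≤ b - a := by
    calc a * (log b - log a) ≤ a * (b / a - 1) := mul_le_mul_of_nonneg_left h ha.le
      _ = b - a := by field_simp
  linarith

theorem log_le_two_mul_sqrt_sub_one {x : ℝ} (hx : 0 < x) : log x ≤ 2 * (√x - 1) := by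
  have h := log_le_sub_one_of_pos (sqrt_pos.mpr hx)
  rw [log_sqrt hx.le] at h
  linarith

theorem mul_log_sub_self_le_log_factorial (n : ℕ) : n * log n - n ≤ log (n ! : ℝ) := by
  rcases eq_or_ne n 0 with rfl | hn
  · simp
  have := Stirling.le_log_factorial_stirling hn
  have : 0 ≤ log n := log_natCast_nonneg n
  have : 0 ≤ log (2 * π) := log_nonneg (by linarith [pi_gt_three])
  linarith

theorem log_factorial_le {n : ℕ} (hn : n ≠ 0) :
    log (n ! : ℝ) ≤ n * log n - n + log n / 2 + 1 := by
  obtain ⟨k, rfl⟩ := Nat.exists_eq_succ_of_ne_zero hn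
  have hlog := log_le_log (Stirling.stirlingSeq'_pos k)
    (Stirling.stirlingSeq'_antitone (Nat.zero_le k))
  have hconst : log (exp 1 / √2) = 1 - log 2 / 2 := by
    rw [log_div (by positivity) (by positivity), log_exp, log_sqrt zero_le_two]
  simp only [Function.comp_apply, Nat.succ_eq_add_one, zero_add] at hlog
  rw [Stirling.log_stirlingSeq_formula, Stirling.stirlingSeq_one, hconst,
    log_mul two_ne_zero (by positivity), log_div (by positivity) (exp_pos 1).ne', log_exp] at hlog
  linarith

theorem abs_log_factorial_floor_sub_le {x : ℝ} (hx : 1 ≤ x) :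
    |log (⌊x⌋₊ ! : ℝ) - (x * log x - x)| ≤ log x + 1 := by
  set m := ⌊x⌋₊
  have hm : (1 : ℝ) ≤ m := by exact_mod_cast (Nat.one_le_floor_iff x).mpr hx
  have hmx : (m : ℝ) ≤ x := Nat.floor_le (by linarith)
  have hxm : x < m + 1 := Nat.lt_floor_add_one x
  have hlogm : log m ≤ log x := log_le_log (by linarith) hmx
  have hlogx : 0 ≤ log x := log_nonneg hx
  have hup := log_factorial_le (n := m) (by exact_mod_cast (by linarith : (0 : ℝ) < m).ne')
  have hlow := mul_log_sub_self_le_log_factorial m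
  have hmono : m * log m - m ≤ x * log x - x :=
    mul_log_sub_self_monotoneOn (Set.mem_Ici.2 hm) (Set.mem_Ici.2 (hm.trans hmx)) hmx
  have hmvt := mul_log_sub_self_sub_le (by linarith) hmx
  have : (x - m) * log x ≤ log x := by nlinarith
  rw [abs_le]
  constructor <;> linarith

theorem abs_log_factorial_div_sub_le {N k : ℕ} (hk : 0 < k) (hkN : k ≤ N) :
    |log ((N / k) ! : ℝ) - ((N / k : ℝ) * log (N / k) - N / k)| ≤ log N + 1 := by
  have hx : (1 : ℝ) ≤ N / k := by
    rw [le_div_iff₀ (by exact_mod_cast hk), one_mul]; exact_mod_cast hkN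
  have h := abs_log_factorial_floor_sub_le hx
  rw [Nat.floor_div_eq_div] at h
  have : log ((N : ℝ) / k) ≤ log N :=
    log_le_log (by linarith) (div_le_self (Nat.cast_nonneg N) (by exact_mod_cast hk))
  linarith

theorem log_factorial_eq_sum_log (N : ℕ) : log (N ! : ℝ) = ∑ n ∈ Ioc 0 N, log n := by
  induction N with
  | zero => simp
  | succ N ih =>
    rw [Nat.factorial_succ, Nat.cast_mul, log_mul (by positivity) (by positivity), ih,
      sum_Ioc_succ_top (Nat.zero_le N), add_comm]

theorem log_factorial_eq_sum_vonMangoldt (N : ℕ) :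
    log (N ! : ℝ) = ∑ d ∈ Ioc 0 N, Λ d * (N / d : ℕ) := by
  rw [← ArithmeticFunction.sum_Ioc_mul_zeta_eq_sum, ArithmeticFunction.vonMangoldt_mul_zeta,
    log_factorial_eq_sum_log]
  rfl

theorem log_factorial_div_eq_sum (N k : ℕ) :
    log ((N / k) ! : ℝ) = ∑ d ∈ Ioc 0 N, Λ d * (N / d / k : ℕ) := by
  rw [log_factorial_eq_sum_vonMangoldt]
  refine sum_subset (Ioc_subset_Ioc_right (Nat.div_le_self N k)) (fun d hd hdk => ?_) |>.trans ?_
  · simp only [mem_Ioc, not_and, not_le] at hd hdk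
    simp [Nat.div_eq_of_lt (hdk hd.1)]
  · refine sum_congr rfl fun d _ => ?_
    rw [Nat.div_div_eq_div_mul, Nat.div_div_eq_div_mul, mul_comm k]

theorem psi_natCast_eq_sum (N : ℕ) : ψ N = ∑ d ∈ Ioc 0 N, Λ d := by
  simp [Chebyshev.psi]

noncomputable def chebyshevWeight (m : ℕ) : ℝ :=
  m - (m / 2 : ℕ) - (m / 3 : ℕ) - (m / 5 : ℕ) + (m / 30 : ℕ)

noncomputable def chebyshevCombination (N : ℕ) : ℝ :=
  log (N ! : ℝ) - log ((N / 2) ! : ℝ) - log ((N / 3) ! : ℝ) - log ((N / 5) ! : ℝ) +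
    log ((N / 30) ! : ℝ)

noncomputable def chebyshevConst : ℝ := log 2 / 2 + log 3 / 3 + log 5 / 5 - log 30 / 30

theorem chebyshevWeight_nonneg (m : ℕ) : 0 ≤ chebyshevWeight m := by
  have h : m / 2 + m / 3 + m / 5 ≤ m + m / 30 := by omega
  have h' : ((m / 2 + m / 3 + m / 5 : ℕ) : ℝ) ≤ (m + m / 30 : ℕ) := by exact_mod_cast h
  push_cast at h'
  unfold chebyshevWeight
  linarith

theorem chebyshevWeight_le_one (m : ℕ) : chebyshevWeight m ≤ 1 := by
  have h : m + m / 30 ≤ m / 2 + m / 3 + m / 5 + 1 := by omega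
  have h' : ((m + m / 30 : ℕ) : ℝ) ≤ (m / 2 + m / 3 + m / 5 + 1 : ℕ) := by exact_mod_cast h
  push_cast at h'
  unfold chebyshevWeight
  linarith

theorem chebyshevWeight_eq_one {m : ℕ} (h0 : 0 < m) (h6 : m < 6) : chebyshevWeight m = 1 := by
  interval_cases m <;> norm_num [chebyshevWeight]

theorem chebyshevCombination_eq_sum (N : ℕ) :
    chebyshevCombination N = ∑ d ∈ Ioc 0 N, Λ d * chebyshevWeight (N / d) := by
  rw [chebyshevCombination, log_factorial_eq_sum_vonMangoldt, log_factorial_div_eq_sum,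
    log_factorial_div_eq_sum, log_factorial_div_eq_sum, log_factorial_div_eq_sum]
  simp only [← sum_sub_distrib, ← sum_add_distrib, chebyshevWeight]
  exact sum_congr rfl fun d _ => by ring

theorem chebyshevCombination_le_psi (N : ℕ) : chebyshevCombination N ≤ ψ N := by
  rw [chebyshevCombination_eq_sum, psi_natCast_eq_sum]
  exact sum_le_sum fun d _ =>
    mul_le_of_le_one_right ArithmeticFunction.vonMangoldt_nonneg (chebyshevWeight_le_one _)

theorem psi_sub_psi_div_six_le (N : ℕ) : ψ N - ψ (N / 6 : ℕ) ≤ chebyshevCombination N := by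
  have hsplit := sum_Ioc_consecutive (fun d => Λ d * chebyshevWeight (N / d))
    (Nat.zero_le (N / 6)) (Nat.div_le_self N 6)
  rw [chebyshevCombination_eq_sum, psi_natCast_eq_sum, psi_natCast_eq_sum, ← hsplit,
    ← sum_Ioc_consecutive _ (Nat.zero_le (N / 6)) (Nat.div_le_self N 6), add_sub_cancel_left]
  have hlow : 0 ≤ ∑ d ∈ Ioc 0 (N / 6), Λ d * chebyshevWeight (N / d) := sum_nonneg fun d _ =>
    mul_nonneg ArithmeticFunction.vonMangoldt_nonneg (chebyshevWeight_nonneg _)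
  have hhigh : ∑ d ∈ Ioc (N / 6) N, Λ d * chebyshevWeight (N / d) =
      ∑ d ∈ Ioc (N / 6) N, Λ d := by
    refine sum_congr rfl fun d hd => ?_
    rw [mem_Ioc] at hd
    rw [chebyshevWeight_eq_one (Nat.div_pos hd.2 (by omega))
      ((Nat.div_lt_iff_lt_mul (by omega)).2 (by omega)), mul_one]
  linarith

theorem chebyshevConst_mul_eq {x : ℝ} (hx : 0 < x) :
    (x * log x - x) - (x / 2 * log (x / 2) - x / 2) - (x / 3 * log (x / 3) - x / 3) -
      (x / 5 * log (x / 5) - x / 5) + (x / 30 * log (x / 30) - x / 30) = chebyshevConst * x := by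
  simp only [log_div hx.ne' (by norm_num : (2 : ℝ) ≠ 0), log_div hx.ne' (by norm_num : (3 : ℝ) ≠ 0),
    log_div hx.ne' (by norm_num : (5 : ℝ) ≠ 0), log_div hx.ne' (by norm_num : (30 : ℝ) ≠ 0),
    chebyshevConst]
  ring

theorem abs_chebyshevCombination_sub_le {N : ℕ} (hN : 30 ≤ N) :
    |chebyshevCombination N - chebyshevConst * N| ≤ 5 * (log N + 1) := by
  have h1 := abs_le.mp (abs_log_factorial_div_sub_le (N := N) one_pos (by omega))
  have h2 := abs_le.mp (abs_log_factorial_div_sub_le (N := N) two_pos (by omega))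
  have h3 := abs_le.mp (abs_log_factorial_div_sub_le (N := N) three_pos (by omega))
  have h5 := abs_le.mp (abs_log_factorial_div_sub_le (N := N) (by norm_num : 0 < 5) (by omega))
  have h30 := abs_le.mp (abs_log_factorial_div_sub_le (N := N) (by norm_num : 0 < 30) hN)
  simp only [Nat.div_one, Nat.cast_one, div_one] at h1
  push_cast at h2 h3 h5 h30
  rw [chebyshevCombination, ← chebyshevConst_mul_eq (by positivity : (0 : ℝ) < N), abs_le]
  constructor <;> linarith

theorem chebyshevConst_eq :
    chebyshevConst = 7 / 15 * log 2 + 3 / 10 * log 3 + 1 / 6 * log 5 := by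
  have : log 30 = log 2 + log 3 + log 5 := by
    rw [show (30 : ℝ) = 2 * 3 * 5 by norm_num, log_mul (by norm_num) (by norm_num),
      log_mul (by norm_num) (by norm_num)]
  rw [chebyshevConst, this]
  ring

theorem chebyshevConst_gt : 0.92 < chebyshevConst := by
  have h3 : 8 * log 2 - 5 * log 3 ≤ 13 / 243 := by
    have := log_le_sub_one_of_pos (by norm_num : (0 : ℝ) < 2 ^ 8 / 3 ^ 5)
    rw [log_div (by norm_num) (by norm_num), log_pow, log_pow] at this
    norm_num at this ⊢; linarith
  have h5 : 7 * log 2 - 3 * log 5 ≤ 3 / 125 := by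
    have := log_le_sub_one_of_pos (by norm_num : (0 : ℝ) < 2 ^ 7 / 5 ^ 3)
    rw [log_div (by norm_num) (by norm_num), log_pow, log_pow] at this
    norm_num at this ⊢; linarith
  rw [chebyshevConst_eq]
  linarith [log_two_gt_d9]

theorem chebyshevConst_lt : chebyshevConst < 5 / 4 := by
  have h3 : log 3 < 2 * log 2 := by
    rw [← log_rpow two_pos]; exact log_lt_log (by norm_num) (by norm_num)
  have h5 : log 5 < 3 * log 2 := by
    rw [← log_rpow two_pos]; exact log_lt_log (by norm_num) (by norm_num)
  rw [chebyshevConst_eq]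
  linarith [log_two_lt_d9]

theorem chebyshevConst_mul_sub_le_psi {N : ℕ} (hN : 30 ≤ N) :
    chebyshevConst * N - 5 * (log N + 1) ≤ ψ N := by
  have := (abs_le.mp (abs_chebyshevCombination_sub_le hN)).1
  linarith [chebyshevCombination_le_psi N]

theorem psi_le_chebyshevConst_mul (N : ℕ) : ψ N ≤ 6 / 5 * chebyshevConst * N + 30 * √N := by
  induction N using Nat.strong_induction_on with
  | _ N ih =>
  have hA : 0 ≤ chebyshevConst := by linarith [chebyshevConst_gt]
  have hsq := sq_sqrt (Nat.cast_nonneg N : (0 : ℝ) ≤ N)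
  have hs0 := sqrt_nonneg (N : ℝ)
  rcases lt_or_ge N 30 with hN | hN
  · have hψ := Chebyshev.psi_le_const_mul_self (Nat.cast_nonneg N : (0 : ℝ) ≤ N)
    have hlog4 : log 4 < 1.4 := by
      rw [show (4 : ℝ) = 2 ^ 2 by norm_num, log_pow]; norm_num; linarith [log_two_lt_d9]
    have hN' : (N : ℝ) ≤ 29 := by exact_mod_cast Nat.le_of_lt_succ hN
    have hs : √N ≤ 5.4 := by nlinarith
    have : 0 ≤ 6 / 5 * chebyshevConst * N := by positivity
    nlinarith
  · -- `ψ N ≤ A N + 5 (log N + 1) + ψ (N / 6)`, and `1 + 1/6 + 1/6² + ⋯ = 6/5`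
    have hrec := ih (N / 6) (Nat.div_lt_self (by omega) (by norm_num))
    have hstep := psi_sub_psi_div_six_le N
    have hcomb := (abs_le.mp (abs_chebyshevCombination_sub_le hN)).2
    have hdiv : ((N / 6 : ℕ) : ℝ) ≤ N / 6 := Nat.cast_div_le
    have hsqrt : √((N / 6 : ℕ) : ℝ) ≤ √N / 2 := by
      rw [le_div_iff₀ two_pos, ← sqrt_sq zero_le_two, ← sqrt_mul (Nat.cast_nonneg _)]
      exact sqrt_le_sqrt (by linarith)
    have hlog := log_le_two_mul_sqrt_sub_one (by positivity : (0 : ℝ) < N)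
    nlinarith

theorem theta_eq_of_forall_not_prime {N M : ℕ} (hNM : N ≤ M)
    (h : ∀ n, N < n → n ≤ M → ¬ n.Prime) : θ M = θ N := by
  simp only [Chebyshev.theta, Nat.floor_natCast]
  congr 1
  ext n
  simp only [mem_filter, mem_Ioc]
  constructor
  · rintro ⟨⟨hn0, hnM⟩, hn⟩
    exact ⟨⟨hn0, not_lt.mp fun hNn => h n hNn hnM hn⟩, hn⟩
  · rintro ⟨⟨hn0, hnN⟩, hn⟩
    exact ⟨⟨hn0, hnN.trans hNM⟩, hn⟩

theorem psi_sub_psi_le_of_forall_not_prime {N M : ℕ} (hNM : N ≤ M) (hM : 1 ≤ M)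
    (h : ∀ n, N < n → n ≤ M → ¬ n.Prime) : ψ M - ψ N ≤ 2 * √M * log M := by
  have := Chebyshev.psi_sub_theta_le (x := M) (by exact_mod_cast hM)
  linarith [theta_eq_of_forall_not_prime hNM h, Chebyshev.theta_le_psi N]

theorem two_mul_sqrt_mul_log_add_lt {y : ℝ} (hy : 64 ^ 4 ≤ y) :
    2 * √y * log y + 30 * √y + 5 * log y + 6 < 0.92 / 7 * y := by
  have hy0 : 0 < y := by linarith
  set v := √(√y)
  have hsy : √y = v ^ 2 := (sq_sqrt (sqrt_nonneg y)).symm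
  have hyv : y = v ^ 4 := by rw [show 4 = 2 * 2 by rfl, pow_mul, ← hsy, sq_sqrt hy0.le]
  have hv : 64 ≤ v := by
    have h64 : √(√(64 ^ 4 : ℝ)) = 64 := by
      rw [show (64 : ℝ) ^ 4 = (64 ^ 2) ^ 2 by norm_num, sqrt_sq (by norm_num),
        sqrt_sq (by norm_num)]
    exact h64 ▸ sqrt_le_sqrt (sqrt_le_sqrt hy)
  have hlog : log y ≤ 4 * (v - 1) := by
    have := log_le_two_mul_sqrt_sub_one (sqrt_pos.mpr hy0)
    rw [log_sqrt hy0.le] at this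
    linarith
  have hv3 : 64 ^ 3 ≤ v ^ 3 := pow_le_pow_left₀ (by norm_num) hv 3
  have hprod : 2 * v ^ 2 * log y ≤ 2 * v ^ 2 * (4 * (v - 1)) :=
    mul_le_mul_of_nonneg_left hlog (by positivity)
  have hpoly :
      2 * v ^ 2 * (4 * (v - 1)) + 30 * v ^ 2 + 5 * (4 * (v - 1)) + 6 < 0.92 / 7 * v ^ 4 := by
    nlinarith
  rw [hsy]
  linarith

theorem exists_prime_lt_and_five_mul_le_seven_mul_eventually {N : ℕ} (hN : 12000000 ≤ N) :
    ∃ q, q.Prime ∧ N < q ∧ 5 * q ≤ 7 * N := by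
  by_contra! h
  set M := 7 * N / 5
  have hgap : ψ M - ψ N ≤ 2 * √M * log M :=
    psi_sub_psi_le_of_forall_not_prime (by omega) (by omega)
      fun n hNn hnM hn => by have := h n hn hNn; omega
  have hlow := chebyshevConst_mul_sub_le_psi (N := M) (by omega)
  have hup := psi_le_chebyshevConst_mul N
  have hNM : (7 * N : ℝ) ≤ 5 * M + 4 := by exact_mod_cast (by omega : 7 * N ≤ 5 * M + 4)
  have hsqrt : √(N : ℝ) ≤ √M := sqrt_le_sqrt (by exact_mod_cast (by omega : N ≤ M))
  have herr := two_mul_sqrt_mul_log_add_lt (y := M) (by exact_mod_cast (by omega : 64 ^ 4 ≤ M))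
  have hA := chebyshevConst_gt
  have hA' := chebyshevConst_lt
  linarith [mul_le_mul_of_nonneg_left hNM (by linarith : (0 : ℝ) ≤ chebyshevConst),
    mul_le_mul_of_nonneg_right hA.le (Nat.cast_nonneg M : (0 : ℝ) ≤ M)]

theorem exists_prime_lt_and_five_mul_le_seven_mul_of_isChain {a P : ℕ} {l : List ℕ}
    (hl : (a :: l).IsChain fun m n => n.Prime ∧ 5 * n ≤ 7 * m) (haP : a ≤ P)
    (hPl : ∃ n ∈ l, P < n) : ∃ q, q.Prime ∧ P < q ∧ 5 * q ≤ 7 * P := by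
  induction l generalizing a with
  | nil => simp at hPl
  | cons b l ih =>
    obtain ⟨⟨hb, hab⟩, hl⟩ := List.isChain_cons_cons.mp hl
    rcases lt_or_ge P b with hPb | hbP
    · exact ⟨b, hb, hPb, by omega⟩
    · obtain ⟨n, hn, hPn⟩ := hPl
      exact ih hl hbP ⟨n, (List.mem_cons.mp hn).resolve_left (by omega), hPn⟩

theorem exists_prime_lt_and_five_mul_le_seven_mul {N : ℕ} (hN : 11 ≤ N) :
    ∃ q, q.Prime ∧ N < q ∧ 5 * q ≤ 7 * N := by
  rcases lt_or_ge N 12000000 with hlt | hge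
  · refine exists_prime_lt_and_five_mul_le_seven_mul_of_isChain (a := 11)
      (l := [13, 17, 23, 31, 43, 59, 79, 109, 151, 211, 293, 409, 571, 797, 1109, 1549, 2161,
        3023, 4231, 5923, 8291, 11597, 16231, 22721, 31799, 44507, 62303, 87223, 122099, 170927,
        239297, 335009, 469009, 656609, 919249, 1286941, 1801717, 2522393, 3531347, 4943843,
        6921353, 9689891, 13565833]) ?_ hN ⟨13565833, by simp, by omega⟩
    simp only [List.isChain_cons_cons, List.isChain_singleton, and_true]
    norm_num
  · exact exists_prime_lt_and_five_mul_le_seven_mul_eventually hge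

theorem stmt4 (j : ℕ) (hj : 0 < j) (h1 : j ≠ 1) (h2 : j ≠ 2) (h4 : j ≠ 4) :
    (p (j + 1) : ℝ) / p j ≤ 7 / 5 := by
  obtain ⟨k, rfl⟩ : ∃ k, j = k + 1 := ⟨j - 1, by omega⟩
  have hpos : (0 : ℝ) < p (k + 1) := by exact_mod_cast (Nat.prime_nth_prime k).pos
  rw [div_le_div_iff₀ hpos (by norm_num)]
  suffices Nat.nth Nat.Prime (k + 1) * 5 ≤ 7 * Nat.nth Nat.Prime k by
    simp only [p, Nat.add_sub_cancel]; exact_mod_cast this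
  rcases (by omega : k = 2 ∨ 4 ≤ k) with rfl | hk
  · simp [Nat.nth_prime_three_eq_seven, Nat.nth_prime_two_eq_five]
  · have h11 : 11 ≤ Nat.nth Nat.Prime k :=
      Nat.nth_prime_four_eq_eleven ▸ Nat.nth_monotone Nat.infinite_setOfPred_prime hk
    obtain ⟨q, hq, hkq, hq7⟩ := exists_prime_lt_and_five_mul_le_seven_mul h11
    have : Nat.nth Nat.Prime (k + 1) ≤ q :=
      not_lt.mp fun hlt => (Nat.le_nth_of_lt_nth_succ hlt hq).not_gt hkq
    omega
end

section
/- Let p be a prime, and let r, α, γ be positive integers with α > 1 and p ∤ γ. If p^α · γ is a sparsely Schemmel totient number of order r, then p^(α−1) · γ is also a sparsely Schemmel totient number of order r. -/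
/-!
Multiplying the argument by the prime `q` multiplies `S r` by exactly `q` when `q` already divides
it, and by `q - r ≤ q` otherwise. Hence for `m > q ^ (α - 1) * γ` with `S r m > 0`, sparseness at `q ^ α * γ < q * m` gives
`q * S r (q ^ (α - 1) * γ) = S r (q ^ α * γ) < S r (q * m) ≤ q * S r m`.
-/

namespace S

variable {r : ℕ}

lemma pos_iff {n : ℕ} : 0 < S r n ↔ ∀ p ∈ n.primeFactors, r < p := by
  simp only [S, Nat.pos_iff_ne_zero, ne_eq, Finset.prod_eq_zero_iff, not_exists, not_and]
  refine forall₂_congr fun p hp => ?_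
  have hp0 : p ≠ 0 := (Nat.prime_of_mem_primeFactors hp).ne_zero
  simp [hp0]
  omega

lemma mul_of_coprime {a b : ℕ} (hab : a.Coprime b) : S r (a * b) = S r a * S r b := by
  unfold S
  rw [hab.primeFactors_mul, Finset.prod_union hab.disjoint_primeFactors]
  congr 1 <;> refine Finset.prod_congr rfl fun p hp => ?_
  · rw [Nat.factorization_eq_of_coprime_left hab (Nat.mem_primeFactors_iff_mem_primeFactorsList.mp hp)]
  · rw [Nat.factorization_eq_of_coprime_right hab (Nat.mem_primeFactors_iff_mem_primeFactorsList.mp hp)]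

lemma prime_pow {q a : ℕ} (hq : q.Prime) (ha : a ≠ 0) : S r (q ^ a) = q ^ (a - 1) * (q - r) := by
  simp [S, Nat.primeFactors_prime_pow ha hq, hq.factorization_pow]

lemma prime_mul_of_dvd {q m : ℕ} (hq : q.Prime) (hm : m ≠ 0) (hqm : q ∣ m) :
    S r (q * m) = q * S r m := by
  set e := m.factorization q
  set t := m / q ^ e
  have he : 1 ≤ e := (hq.dvd_iff_one_le_factorization hm).mp hqm
  have hqe : q ^ e = q * q ^ (e - 1) := by rw [← pow_succ', Nat.sub_add_cancel he]
  have hqt : q.Coprime t := Nat.coprime_ordCompl hq hm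
  have hm_eq : m = q ^ e * t := (Nat.ordProj_mul_ordCompl_eq_self m q).symm
  rw [hm_eq, ← mul_assoc, ← pow_succ', mul_of_coprime (hqt.pow_left _),
    mul_of_coprime (hqt.pow_left _), prime_pow hq (Nat.succ_ne_zero e),
    prime_pow hq (Nat.one_le_iff_ne_zero.mp he), Nat.succ_sub_one, hqe]
  ring

lemma prime_mul_of_not_dvd {q m : ℕ} (hq : q.Prime) (hqm : ¬ q ∣ m) :
    S r (q * m) = (q - r) * S r m := by
  rw [mul_of_coprime (hq.coprime_iff_not_dvd.mpr hqm), ← pow_one q, prime_pow hq one_ne_zero]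
  simp

lemma prime_mul_le {q : ℕ} (hq : q.Prime) (m : ℕ) : S r (q * m) ≤ q * S r m := by
  rcases eq_or_ne m 0 with rfl | hm
  · simpa [S] using hq.one_le
  by_cases hqm : q ∣ m
  · exact (prime_mul_of_dvd hq hm hqm).le
  · rw [prime_mul_of_not_dvd hq hqm]
    exact Nat.mul_le_mul_right _ (Nat.sub_le q r)

lemma prime_mul_pos {q m : ℕ} (hq : q.Prime) (hrq : r < q) (hm : 0 < S r m) : 0 < S r (q * m) := by
  rcases eq_or_ne m 0 with rfl | hm0
  · simpa using hm
  rw [pos_iff] at hm ⊢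
  rw [Nat.primeFactors_mul hq.ne_zero hm0, hq.primeFactors]
  simpa [hrq] using hm

end S

theorem stmt5_general (q r α γ : ℕ) (hq : q.Prime) (hα : 1 < α)
    (hqγ : ¬ q ∣ γ) (h : SST r (q ^ α * γ)) :
    SST r (q ^ (α - 1) * γ) := by
  obtain ⟨hpos, hsparse⟩ := h
  have hγ : γ ≠ 0 := by rintro rfl; exact hqγ (dvd_zero q)
  have hn : q ^ (α - 1) * γ ≠ 0 := mul_ne_zero (pow_ne_zero _ hq.ne_zero) hγ
  have hqα : q ^ α * γ = q * (q ^ (α - 1) * γ) := by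
    rw [← mul_assoc, ← pow_succ', Nat.sub_add_cancel hα.le]
  have hS : S r (q ^ α * γ) = q * S r (q ^ (α - 1) * γ) := by
    rw [hqα, S.prime_mul_of_dvd hq hn (dvd_mul_of_dvd_left (dvd_pow_self q (by omega)) γ)]
  have hrq : r < q := S.pos_iff.mp hpos q <|
    Nat.mem_primeFactors.mpr ⟨hq, ⟨_, hqα⟩, hqα ▸ mul_ne_zero hq.ne_zero hn⟩
  refine ⟨Nat.pos_of_mul_pos_left (hS ▸ hpos), fun m hm hSm => ?_⟩
  have hlt : q ^ α * γ < q * m := hqα ▸ Nat.mul_lt_mul_of_pos_left hm hq.pos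
  have hS_lt := hsparse (q * m) hlt (S.prime_mul_pos hq hrq hSm)
  exact Nat.lt_of_mul_lt_mul_left (hS ▸ hS_lt |>.trans_le (S.prime_mul_le hq m))

theorem stmt5 (q r α γ : ℕ) (hq : q.Prime) (hr : 0 < r) (hα : 1 < α)
    (hγ : 0 < γ) (hqγ : ¬ q ∣ γ) (h : SST r (q ^ α * γ)) :
    SST r (q ^ (α - 1) * γ) :=
  stmt5_general q r α γ hq hα hqγ h
end

section
/- For every positive integer r, the square of the smallest prime greater than r, p_{b(r)+1}^2, is not a sparsely Schemmel totient number of order r. -/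
/-!
Let `Q` be the least prime greater than `r`, so that `S r (Q ^ 2) = Q * (Q - r)`. Any prime `P`
with `Q < P ≤ Q + r` gives a larger number `Q * P` with
`S r (Q * P) = (Q - r) * (P - r) ≤ S r (Q ^ 2)`. Such a `P` exists because `(r, 2r + 1]` contains
two primes. For `r ≥ 512` this comes out of Erdős's proof of Bertrand's postulate: fewer than
`√(2r)` primes lie below `√(2r)`, which leaves room for one prime of `(r, 2r]` in the upper
bound for the central binomial coefficient. Smaller `r` are covered by an explicit chain of
primes.
-/

open Nat Finset
open scoped Nat.Prime

theorem primeCounting_lt_self {n : ℕ} (hn : n ≠ 0) : π n < n := by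
  rw [← primesLE_card_eq_primeCounting, primesLE_eq_filter_Ioc_one]
  calc #{p ∈ Ioc 1 n | p.Prime} ≤ #(Ioc 1 n) := card_filter_le _ _
    _ < n := by rw [card_Ioc]; omega

theorem centralBinom_le_pow_mul_four_pow {n : ℕ} (hn : 2 < n) :
    centralBinom n ≤
      (2 * n) ^ (π (sqrt (2 * n)) + #{p ∈ Ioc n (2 * n) | p.Prime}) * 4 ^ (2 * n / 3) := by
  set ν := (centralBinom n).factorization
  set P := primesLE (2 * n) with hP
  set P' := {p ∈ P | p ≤ 2 * n / 3}
  have hprod : centralBinom n = ∏ p ∈ P, p ^ ν p := by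
    rw [hP, primesLE_eq_filter_range, prod_filter_of_ne, prod_pow_factorization_centralBinom]
    intro p _ hp
    contrapose! hp
    rw [factorization_eq_zero_of_not_prime _ hp, pow_zero]
  have hle : ∀ p, p ^ ν p ≤ 2 * n := fun p => pow_factorization_choose_le (by omega)
  have hle_self : ∀ p, p.Prime → sqrt (2 * n) < p → p ^ ν p ≤ p := fun p hp hsq =>
    (pow_le_pow_right₀ hp.one_lt.le (factorization_choose_le_one (sqrt_lt'.mp hsq))).trans_eq
      (pow_one p)
  have hsmall : ∏ p ∈ P' with p ≤ sqrt (2 * n), p ^ ν p ≤ (2 * n) ^ π (sqrt (2 * n)) := by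
    refine (prod_le_pow_card _ _ _ fun p _ => hle p).trans (pow_le_pow_right₀ (by omega) ?_)
    rw [← primesLE_card_eq_primeCounting]
    refine card_le_card fun p hp => ?_
    simp only [P, P', mem_filter, mem_primesLE] at hp ⊢
    exact ⟨hp.2, hp.1.1.2⟩
  have hmiddle : ∏ p ∈ P' with ¬ p ≤ sqrt (2 * n), p ^ ν p ≤ 4 ^ (2 * n / 3) := by
    refine le_trans ?_ (primorial_le_four_pow _)
    refine (prod_le_prod' fun p hp => hle_self p ?_ ?_).trans
      (prod_le_prod_of_subset_of_one_le' (fun p hp => ?_) fun p hp _ => ?_)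
    all_goals simp only [P, P', mem_filter, mem_primesLE, mem_range] at hp ⊢
    · exact hp.1.1.2
    · omega
    · exact ⟨by omega, hp.1.1.2⟩
    · exact hp.2.one_lt.le
  have hlarge : ∏ p ∈ P with ¬ p ≤ 2 * n / 3, p ^ ν p ≤
      (2 * n) ^ #{p ∈ Ioc n (2 * n) | p.Prime} := by
    rw [← prod_subset (s₁ := {p ∈ Ioc n (2 * n) | p.Prime}) (fun p hp => ?_)
      fun p hp hp' => ?_]
    · exact prod_le_pow_card _ _ _ fun p _ => hle p
    all_goals simp only [P, mem_filter, mem_primesLE, mem_Ioc] at hp ⊢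
    · exact ⟨⟨hp.1.2, hp.2⟩, by omega⟩
    · simp only [mem_filter, mem_Ioc, not_and] at hp'
      rw [factorization_centralBinom_of_two_mul_self_lt_three_mul hn (by grind) (by omega),
        pow_zero]
  calc centralBinom n
      = (∏ p ∈ P' with p ≤ sqrt (2 * n), p ^ ν p) *
          (∏ p ∈ P' with ¬ p ≤ sqrt (2 * n), p ^ ν p) *
          ∏ p ∈ P with ¬ p ≤ 2 * n / 3, p ^ ν p := by
        rw [prod_filter_mul_prod_filter_not, prod_filter_mul_prod_filter_not, hprod]
    _ ≤ (2 * n) ^ π (sqrt (2 * n)) * 4 ^ (2 * n / 3) *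
          (2 * n) ^ #{p ∈ Ioc n (2 * n) | p.Prime} := by
        gcongr
    _ = _ := by ring

theorem one_lt_card_filter_prime_Ioc_two_mul {n : ℕ} (hn : 512 ≤ n) :
    1 < #{p ∈ Ioc n (2 * n) | p.Prime} := by
  by_contra! h
  have hexp : π (sqrt (2 * n)) + #{p ∈ Ioc n (2 * n) | p.Prime} ≤ sqrt (2 * n) := by
    have := primeCounting_lt_self (sqrt_pos.mpr (by omega : 0 < 2 * n)).ne'
    omega
  have hlt := calc
    4 ^ n < n * centralBinom n := four_pow_lt_mul_centralBinom n (by omega)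
    _ ≤ n * ((2 * n) ^ (π (sqrt (2 * n)) + #{p ∈ Ioc n (2 * n) | p.Prime}) *
          4 ^ (2 * n / 3)) := by
        gcongr; exact centralBinom_le_pow_mul_four_pow (by omega)
    _ ≤ n * (2 * n) ^ sqrt (2 * n) * 4 ^ (2 * n / 3) := by
        rw [mul_assoc]; gcongr; omega
    _ ≤ 4 ^ n := bertrand_main_inequality hn
  exact lt_irrefl _ hlt

theorem exists_two_primes_lt_le_two_mul_add_one_of_chain {n : ℕ} (q p p' : ℕ)
    (hpp' : p.Prime ∧ p'.Prime ∧ p < p' ∧ p' ≤ 2 * q + 1)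
    (H : n < q → ∃ p p', p.Prime ∧ p'.Prime ∧ n < p ∧ p < p' ∧ p' ≤ 2 * n + 1)
    (hn : n < p) :
    ∃ p p', p.Prime ∧ p'.Prime ∧ n < p ∧ p < p' ∧ p' ≤ 2 * n + 1 := by
  by_cases hq : n < q
  · exact H hq
  · exact ⟨p, p', hpp'.1, hpp'.2.1, hn, hpp'.2.2.1, by omega⟩

theorem exists_two_primes_lt_le_two_mul_add_one {n : ℕ} (hn : n ≠ 0) :
    ∃ p p', p.Prime ∧ p'.Prime ∧ n < p ∧ p < p' ∧ p' ≤ 2 * n + 1 := by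
  rcases le_or_gt 512 n with h | h
  · obtain ⟨p, p', hp, hp', hne⟩ := one_lt_card_iff.mp (one_lt_card_filter_prime_Ioc_two_mul h)
    simp only [mem_filter, mem_Ioc] at hp hp'
    rcases hne.lt_or_gt with hlt | hlt
    · exact ⟨p, p', hp.2, hp'.2, hp.1.1, hlt, by omega⟩
    · exact ⟨p', p, hp'.2, hp.2, hp'.1.1, hlt, by omega⟩
  refine exists_two_primes_lt_le_two_mul_add_one_of_chain 263 521 523 (by norm_num) ?_ (by omega)
  refine fun h => exists_two_primes_lt_le_two_mul_add_one_of_chain 137 263 269 (by norm_num) ?_ h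
  refine fun h => exists_two_primes_lt_le_two_mul_add_one_of_chain 71 137 139 (by norm_num) ?_ h
  refine fun h => exists_two_primes_lt_le_two_mul_add_one_of_chain 37 71 73 (by norm_num) ?_ h
  refine fun h => exists_two_primes_lt_le_two_mul_add_one_of_chain 23 37 41 (by norm_num) ?_ h
  refine fun h => exists_two_primes_lt_le_two_mul_add_one_of_chain 17 23 29 (by norm_num) ?_ h
  refine fun h => exists_two_primes_lt_le_two_mul_add_one_of_chain 11 17 19 (by norm_num) ?_ h
  refine fun h => exists_two_primes_lt_le_two_mul_add_one_of_chain 7 11 13 (by norm_num) ?_ h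
  refine fun h => exists_two_primes_lt_le_two_mul_add_one_of_chain 5 7 11 (by norm_num) ?_ h
  refine fun h => exists_two_primes_lt_le_two_mul_add_one_of_chain 3 5 7 (by norm_num) ?_ h
  refine fun h => exists_two_primes_lt_le_two_mul_add_one_of_chain 2 3 5 (by norm_num) ?_ h
  refine fun h => exists_two_primes_lt_le_two_mul_add_one_of_chain 1 2 3 (by norm_num) ?_ h
  omega

theorem S_eq_factorization_prod (r n : ℕ) :
    S r n = n.factorization.prod fun q k => q ^ (k - 1) * (q - r) :=
  (prod_factorization_eq_prod_primeFactors fun q k => q ^ (k - 1) * (q - r)).symm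

theorem S_mul {r m n : ℕ} (h : Coprime m n) : S r (m * n) = S r m * S r n := by
  simp only [S_eq_factorization_prod, factorization_mul_of_coprime h]
  exact Finsupp.prod_add_index_of_disjoint h.disjoint_primeFactors _

theorem S_prime_pow {r q k : ℕ} (hq : q.Prime) (hk : k ≠ 0) :
    S r (q ^ k) = q ^ (k - 1) * (q - r) := by
  rw [S, primeFactors_prime_pow hk hq, prod_singleton, hq.factorization_pow,
    Finsupp.single_eq_same]

theorem S_prime {r q : ℕ} (hq : q.Prime) : S r q = q - r := by
  simpa using S_prime_pow (r := r) hq one_ne_zero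

theorem isLeast_p_b_add_one (r : ℕ) : IsLeast {q | q.Prime ∧ r < q} (p (b r + 1)) := by
  have hb : b r = count Nat.Prime (r + 1) := (count_eq_card_filter_range _ _).symm
  have hp : p (b r + 1) = sInf {q | q.Prime ∧ r + 1 ≤ q} := by
    rw [p, add_tsub_cancel_right, hb, nth_count_eq_sInf]
  have hne : {q | q.Prime ∧ r + 1 ≤ q}.Nonempty :=
    let ⟨q, hq, hprime⟩ := exists_infinite_primes (r + 1); ⟨q, hprime, hq⟩
  rw [hp]
  exact ⟨Nat.sInf_mem hne, fun q hq => Nat.sInf_le hq⟩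

theorem stmt7 (r : ℕ) (hr : 0 < r) : ¬ SST r (p (b r + 1) ^ 2) := by
  set Q := p (b r + 1)
  obtain ⟨⟨hQ, hrQ⟩, hQ_le⟩ := isLeast_p_b_add_one r
  obtain ⟨q, P, hq, hP, hrq, hqP, hPr⟩ := exists_two_primes_lt_le_two_mul_add_one hr.ne'
  have hQP : Q < P := (hQ_le ⟨hq, hrq⟩).trans_lt hqP
  have hS : S r (Q * P) = (Q - r) * (P - r) := by
    rw [S_mul ((coprime_primes hQ hP).mpr hQP.ne), S_prime hQ, S_prime hP]
  have hlt : Q ^ 2 < Q * P := by rw [sq]; exact Nat.mul_lt_mul_of_pos_left hQP hQ.pos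
  rintro ⟨-, hsparse⟩
  have h := hsparse (Q * P) hlt (by rw [hS]; exact Nat.mul_pos (by omega) (by omega))
  rw [hS, S_prime_pow hQ two_ne_zero, pow_one, mul_comm Q] at h
  exact h.not_ge (Nat.mul_le_mul_left _ (by omega))
end

section
/- Let r be a positive integer and n a sparsely Schemmel totient number of order r with at least two distinct prime factors. Then P_1(n) < Q_1(n)·(1 − J_r + (J_r/r)·Q_1(n)), where P_1(n) is the largest prime divisor of n, Q_1(n) is the smallest prime greater than r not dividing n, and J_r = J(r#) is the Jacobsthal function of the primorial of r. -/
/-!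
Let `P = P₁(n)` and `Q = Q₁(n)`. Pick `y ∈ B_r` (e.g. coprime to `r#`) among the `J_r`
integers following `⌊P/Q⌋`, so that `P < Qy ≤ P + J_r Q`, and compare `n` with
`m = (n/P)·Q·y > n`, which lies in `B_r`. Since `S_r(t) = t ∏_{q ∣ t} (1 - r/q)` on `B_r`, and
every prime factor of `n` except possibly `P` divides `m` along with `Q`, sparseness
`S_r(n) < S_r(m)` gives `P - r < y (Q - r)`, which rearranges to the claim.
-/

open Finset

lemma S_pos_iff {r t : ℕ} : 0 < S r t ↔ ∀ q ∈ t.primeFactors, r < q := by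
  refine CanonicallyOrderedAdd.prod_pos.trans (forall₂_congr fun q hq => ?_)
  simp [pow_pos (Nat.prime_of_mem_primeFactors hq).pos]

lemma cast_S_eq_mul_prod {r t : ℕ} (ht : t ≠ 0) (hr : ∀ q ∈ t.primeFactors, r < q) :
    (S r t : ℝ) = t * ∏ q ∈ t.primeFactors, (1 - (r : ℝ) / q) := by
  have ht' : (t : ℝ) = ∏ q ∈ t.primeFactors, (q : ℝ) ^ t.factorization q := by
    conv_lhs => rw [← Nat.prod_factorization_pow_eq_self ht]
    rw [Finsupp.prod, Nat.support_factorization]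
    push_cast
    rfl
  rw [S, ht', ← prod_mul_distrib, Nat.cast_prod]
  refine prod_congr rfl fun q hq => ?_
  have hqp := Nat.prime_of_mem_primeFactors hq
  have hq0 : (q : ℝ) ≠ 0 := by exact_mod_cast hqp.ne_zero
  have hk : t.factorization q = t.factorization q - 1 + 1 := (Nat.succ_pred_eq_of_pos
    (hqp.factorization_pos_of_dvd ht (Nat.dvd_of_mem_primeFactors hq))).symm
  rw [hk, Nat.add_sub_cancel, pow_succ]
  push_cast [Nat.cast_sub (hr q hq).le]
  field_simp

lemma one_sub_div_pos {r q : ℕ} (h : r < q) : 0 < 1 - (r : ℝ) / q := by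
  rw [sub_pos, div_lt_one (by exact_mod_cast (Nat.zero_le r).trans_lt h)]
  exact_mod_cast h

lemma cast_S_le_mul_prod_of_subset {r t : ℕ} {s : Finset ℕ} (ht : t ≠ 0)
    (hr : ∀ q ∈ t.primeFactors, r < q) (hs : s ⊆ t.primeFactors) :
    (S r t : ℝ) ≤ t * ∏ q ∈ s, (1 - (r : ℝ) / q) := by
  rw [cast_S_eq_mul_prod ht hr]
  refine mul_le_mul_of_nonneg_left (prod_le_prod_of_subset_of_le_one hs
    (fun q hq => (one_sub_div_pos (hr q hq)).le) fun q _ _ => ?_) (Nat.cast_nonneg t)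
  simp only [sub_le_self_iff]; positivity

lemma S_mul_pos {r a b : ℕ} (ha : 0 < S r a) (hb : 0 < S r b) : 0 < S r (a * b) := by
  rcases eq_or_ne a 0 with rfl | ha0
  · simpa using ha
  rcases eq_or_ne b 0 with rfl | hb0
  · simpa using hb
  rw [S_pos_iff] at ha hb ⊢
  rw [Nat.primeFactors_mul ha0 hb0]
  intro q hq
  exact (mem_union.mp hq).elim (ha q) (hb q)

lemma S_pos_of_dvd {r d n : ℕ} (hn : 0 < S r n) (hn0 : n ≠ 0) (hd : d ∣ n) : 0 < S r d :=
  S_pos_iff.mpr fun q hq => S_pos_iff.mp hn q (Nat.primeFactors_mono hd hn0 hq)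

theorem SST.sub_lt_mul_sub {r n P Q y : ℕ} (h : SST r n) (hP : P ∈ n.primeFactors)
    (hQ : Q.Prime) (hrQ : r < Q) (hQn : ¬ Q ∣ n) (hy : 0 < S r y) (hPQy : P < Q * y) :
    (P : ℝ) - r < y * ((Q : ℝ) - r) := by
  obtain ⟨hSn, hmin⟩ := h
  have hn0 : n ≠ 0 := (Nat.mem_primeFactors.mp hP).2.2
  have hPp := Nat.prime_of_mem_primeFactors hP
  obtain ⟨v, rfl⟩ := Nat.dvd_of_mem_primeFactors hP
  have hv0 : v ≠ 0 := right_ne_zero_of_mul hn0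
  have hy0 : y ≠ 0 := by rintro rfl; simp at hPQy
  have hm0 : Q * y * v ≠ 0 := Nat.mul_ne_zero (Nat.mul_ne_zero hQ.ne_zero hy0) hv0
  have hSm : 0 < S r (Q * y * v) :=
    S_mul_pos (S_mul_pos (S_pos_iff.mpr (by simpa [hQ.primeFactors] using hrQ)) hy)
      (S_pos_of_dvd hSn hn0 (dvd_mul_left v P))
  have hlt : (S r (P * v) : ℝ) < S r (Q * y * v) := by
    exact_mod_cast hmin _ (by nlinarith [Nat.pos_of_ne_zero hv0]) hSm
  have hX : (P * v).primeFactors.erase P ⊆ v.primeFactors := by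
    rw [Nat.primeFactors_mul hPp.ne_zero hv0, hPp.primeFactors]
    intro q
    simp +contextual
  have hQX : Q ∉ (P * v).primeFactors.erase P := fun hq =>
    hQn (Nat.dvd_of_mem_primeFactors (mem_of_mem_erase hq))
  set A := ∏ q ∈ (P * v).primeFactors.erase P, (1 - (r : ℝ) / q)
  have hA : 0 < A :=
    prod_pos fun q hq => one_sub_div_pos (S_pos_iff.mp hSn q (mem_of_mem_erase hq))
  have hSn_eq : (S r (P * v) : ℝ) = P * v * ((1 - r / P) * A) := by
    rw [cast_S_eq_mul_prod hn0 (S_pos_iff.mp hSn), ← mul_prod_erase _ _ hP]; push_cast; rfl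
  have hSm_le : (S r (Q * y * v) : ℝ) ≤ Q * y * v * ((1 - r / Q) * A) := by
    rw [← prod_insert (f := fun q : ℕ => 1 - (r : ℝ) / q) hQX]
    exact_mod_cast cast_S_le_mul_prod_of_subset hm0 (S_pos_iff.mp hSm) (insert_subset
      (hQ.mem_primeFactors (dvd_mul_of_dvd_left (dvd_mul_right Q y) v) hm0)
      (hX.trans (Nat.primeFactors_mono (dvd_mul_left v _) hm0)))
  have hP0 : (P : ℝ) ≠ 0 := by exact_mod_cast hPp.ne_zero
  have hQ0 : (Q : ℝ) ≠ 0 := by exact_mod_cast hQ.ne_zero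
  have hvA : 0 < (v : ℝ) * A := mul_pos (by exact_mod_cast Nat.pos_of_ne_zero hv0) hA
  refine lt_of_mul_lt_mul_right ?_ hvA.le
  calc ((P : ℝ) - r) * (v * A) = S r (P * v) := by rw [hSn_eq]; field_simp
    _ < S r (Q * y * v) := hlt
    _ ≤ Q * y * v * ((1 - r / Q) * A) := hSm_le
    _ = y * ((Q : ℝ) - r) * (v * A) := by field_simp

lemma exists_coprime_mem_Ico_J {N : ℕ} (hN : 0 < N) (x : ℕ) :
    ∃ y ∈ Ico x (x + J N), y.Coprime N := by
  -- `sInf` is attained once the set is nonempty: the next `y ≡ 1 (mod N)` gives `J N ≤ N + 2`.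
  refine Nat.sInf_mem (s := {a | ∀ x, ∃ y ∈ Ico x (x + a), y.Coprime N})
    ⟨N + 2, fun x => ⟨N * (x / N) + N + 1, ?_, ?_⟩⟩ x
  · have := Nat.div_add_mod x N
    have := Nat.mod_lt x hN
    rw [mem_Ico]
    omega
  · simp [add_assoc]

lemma S_pos_of_coprime_primorial {r y : ℕ} (hy : y.Coprime (primorial r)) : 0 < S r y := by
  refine S_pos_iff.mpr fun q hq => ?_
  have hqp := Nat.prime_of_mem_primeFactors hq
  have := hqp.coprime_iff_not_dvd.mp (hy.coprime_dvd_left (Nat.dvd_of_mem_primeFactors hq))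
  rwa [hqp.dvd_primorial_iff, not_le] at this

lemma Pk_one_mem_primeFactors {n : ℕ} (h : n.primeFactors.Nonempty) :
    Pk 1 n ∈ n.primeFactors := by
  have hl : 0 < (n.primeFactors.sort (· ≤ ·)).reverse.length := by simpa using h.card_pos
  rw [Pk, Nat.sub_self, List.getD_eq_getElem?_getD, List.getElem?_eq_getElem hl]
  exact (mem_sort _).mp (List.mem_reverse.mp (List.getElem_mem hl))

lemma Qk_one_spec (r : ℕ) {n : ℕ} (hn : n ≠ 0) :
    (Qk r 1 n).Prime ∧ r < Qk r 1 n ∧ ¬ Qk r 1 n ∣ n := by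
  refine Nat.nth_mem_of_infinite (p := fun q => q.Prime ∧ r < q ∧ ¬ q ∣ n)
    (Set.infinite_of_forall_exists_gt fun a => ?_) 0
  obtain ⟨q, hq, hqp⟩ := Nat.exists_infinite_primes (a + r + n + 1)
  refine ⟨q, ⟨hqp, by omega, fun hd => ?_⟩, by omega⟩
  have := Nat.le_of_dvd (by omega) hd
  omega

lemma lt_of_sub_lt_mul_sub {P Q r j y : ℝ} (hr : 0 < r) (hrQ : r < Q) (hy : y ≤ P / Q + j)
    (h : P - r < y * (Q - r)) : P < Q * (1 - j + j / r * Q) := by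
  have hQ : 0 < Q := hr.trans hrQ
  have h' : (P - r) * Q < (P + j * Q) * (Q - r) := by
    have := h.trans_le (mul_le_mul_of_nonneg_right hy (by linarith))
    rw [div_add' _ _ _ hQ.ne', div_mul_eq_mul_div, lt_div_iff₀ hQ] at this
    exact this
  rw [show Q * (1 - j + j / r * Q) = (Q * r - j * Q * r + j * Q * Q) / r by field_simp,
    lt_div_iff₀ hr]
  linarith

theorem stmt11 (r n : ℕ) (hr : 0 < r) (h : SST r n)
    (hω : 2 ≤ n.primeFactors.card) :
    (Pk 1 n : ℝ) < (Qk r 1 n : ℝ) *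
      (1 - (J (primorial r) : ℝ) + ((J (primorial r) : ℝ) / r) * (Qk r 1 n : ℝ)) := by
  set P := Pk 1 n
  set Q := Qk r 1 n
  have hn0 : n ≠ 0 := by rintro rfl; simp at hω
  obtain ⟨hQ, hrQ, hQn⟩ := Qk_one_spec r hn0
  obtain ⟨y, hy, hcop⟩ := exists_coprime_mem_Ico_J (primorial_pos r) (P / Q + 1)
  rw [mem_Ico] at hy
  have hPQy : P < Q * y :=
    (Nat.lt_mul_div_succ P hQ.pos).trans_le (Nat.mul_le_mul_left Q hy.1)
  have hyJ : (y : ℝ) ≤ P / Q + J (primorial r) := by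
    have : y ≤ P / Q + J (primorial r) := by omega
    calc (y : ℝ) ≤ (P / Q : ℕ) + J (primorial r) := by exact_mod_cast this
      _ ≤ P / Q + J (primorial r) := by gcongr; exact Nat.cast_div_le
  exact lt_of_sub_lt_mul_sub (by exact_mod_cast hr) (by exact_mod_cast hrQ) hyJ
    (h.sub_lt_mul_sub (Pk_one_mem_primeFactors (card_pos.mp (by omega))) hQ hrQ hQn
      (S_pos_of_coprime_primorial hcop) hPQy)
end

section
/- For every sparsely Schemmel totient number n of order 2, the fourth power of the largest prime divisor of n does not divide n. -/
section Schemmel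

variable {r : ℕ}

lemma S_mul_prime_of_dvd {a q : ℕ} (hq : q.Prime) (ha : a ≠ 0) (hqa : q ∣ a) :
    S r (a * q) = S r a * q := by
  have hmem : q ∈ a.primeFactors := Nat.mem_primeFactors.mpr ⟨hq, hqa, ha⟩
  have hsupp : (a * q).primeFactors = a.primeFactors := by
    rw [Nat.primeFactors_mul ha hq.ne_zero, hq.primeFactors]
    exact Finset.union_eq_left.mpr (Finset.singleton_subset_iff.mpr hmem)
  have hfac : (a * q).factorization = a.factorization + Finsupp.single q 1 := by
    rw [Nat.factorization_mul ha hq.ne_zero, hq.factorization]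
  have hpos : 0 < a.factorization q := hq.factorization_pos_of_dvd ha hqa
  unfold S
  rw [hsupp, ← Finset.mul_prod_erase _ _ hmem, ← Finset.mul_prod_erase _ _ hmem, hfac,
    Finset.prod_congr rfl fun x hx => by
      rw [Finsupp.add_apply, Finsupp.single_eq_of_ne (Finset.ne_of_mem_erase hx), add_zero]]
  rw [Finsupp.add_apply, Finsupp.single_eq_same, Nat.sub_add_comm hpos, pow_succ]
  ring

lemma S_mul_prime_of_not_dvd {a q : ℕ} (hq : q.Prime) (ha : a ≠ 0) (hqa : ¬ q ∣ a) :
    S r (a * q) = S r a * (q - r) := by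
  have hmem : q ∉ a.primeFactors := fun h => hqa (Nat.dvd_of_mem_primeFactors h)
  have hsupp : (a * q).primeFactors = insert q a.primeFactors := by
    rw [Nat.primeFactors_mul ha hq.ne_zero, hq.primeFactors, Finset.union_comm,
      Finset.insert_eq]
  have hfac : (a * q).factorization = a.factorization + Finsupp.single q 1 := by
    rw [Nat.factorization_mul ha hq.ne_zero, hq.factorization]
  unfold S
  rw [hsupp, Finset.prod_insert hmem, hfac,
    Finset.prod_congr rfl fun x hx => by
      rw [Finsupp.add_apply, Finsupp.single_eq_of_ne (ne_of_mem_of_not_mem hx hmem), add_zero]]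
  rw [Finsupp.add_apply, Finsupp.single_eq_same, Nat.factorization_eq_zero_of_not_dvd hqa]
  simp [mul_comm]

lemma S_mul_pow_of_dvd {a q : ℕ} (hq : q.Prime) (ha : a ≠ 0) (hqa : q ∣ a) (j : ℕ) :
    S r (a * q ^ j) = S r a * q ^ j := by
  induction j with
  | zero => simp
  | succ j ih =>
    rw [pow_succ, ← mul_assoc, S_mul_prime_of_dvd hq (mul_ne_zero ha (pow_ne_zero _ hq.ne_zero))
      (dvd_mul_of_dvd_left hqa _),
      ih, mul_assoc]

lemma S_mul_le {a : ℕ} (ha : a ≠ 0) {c : ℕ} (hc : c ≠ 0) : S r (a * c) ≤ S r a * c := by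
  induction c using induction_on_primes with
  | zero => exact absurd rfl hc
  | one => simp
  | prime_mul q c hq ih =>
    have hc : c ≠ 0 := right_ne_zero_of_mul hc
    have hac : a * c ≠ 0 := mul_ne_zero ha hc
    calc S r (a * (q * c)) = S r (a * c * q) := by rw [mul_left_comm, mul_comm]
      _ ≤ S r (a * c) * q := by
        by_cases hqac : q ∣ a * c
        · rw [S_mul_prime_of_dvd hq hac hqac]
        · rw [S_mul_prime_of_not_dvd hq hac hqac]
          exact Nat.mul_le_mul_left _ (Nat.sub_le _ _)
      _ ≤ S r a * c * q := Nat.mul_le_mul_right _ (ih hc)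
      _ = S r a * (q * c) := by ring

lemma S_mul_mul_prime_le {a c q : ℕ} (hq : q.Prime) (ha : a ≠ 0) (hc : c ≠ 0) (hqa : ¬ q ∣ a) :
    S r (a * c * q) ≤ S r a * c * (q - r) := by
  obtain ⟨v, d, hqd, rfl⟩ := Nat.exists_eq_pow_mul_and_not_dvd hc q hq.ne_one
  have hd : d ≠ 0 := right_ne_zero_of_mul hc
  have had : a * d ≠ 0 := mul_ne_zero ha hd
  have hqad : ¬ q ∣ a * d := fun h => (hq.dvd_mul.mp h).elim hqa hqd
  calc S r (a * (q ^ v * d) * q) = S r (a * d * q * q ^ v) := by ring_nf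
    _ = S r (a * d) * (q - r) * q ^ v := by
      rw [S_mul_pow_of_dvd hq (mul_ne_zero had hq.ne_zero) (dvd_mul_left q _),
        S_mul_prime_of_not_dvd hq had hqad]
    _ ≤ S r a * d * (q - r) * q ^ v := by gcongr; exact S_mul_le ha hd
    _ = S r a * (q ^ v * d) * (q - r) := by ring

lemma S_eq_zero_of_prime_dvd {n q : ℕ} (hn : n ≠ 0) (hq : q.Prime) (hqn : q ∣ n) (hqr : q ≤ r) :
    S r n = 0 :=
  Finset.prod_eq_zero (Nat.mem_primeFactors.mpr ⟨hq, hqn, hn⟩) (by simp [Nat.sub_eq_zero_of_le hqr])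

end Schemmel

lemma S_two_pos_of_odd {n : ℕ} (hn : Odd n) : 0 < S 2 n := by
  refine Finset.prod_pos fun q hq => ?_
  obtain ⟨hqp, hqn, -⟩ := Nat.mem_primeFactors.mp hq
  have : q ≠ 2 := by rintro rfl; exact hn.not_two_dvd_nat hqn
  have := hqp.two_le
  exact Nat.mul_pos (pow_pos hqp.pos _) (by omega)

lemma S_two_three : S 2 3 = 1 := by
  simp [S, Nat.prime_three.primeFactors, Nat.prime_three.factorization]

lemma SST.odd {n : ℕ} (h : SST 2 n) : Odd n := by
  obtain rfl | hn := eq_or_ne n 0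
  · -- `S 2 0` is the empty product, equal to `S 2 3 = 1`.
    have h3 := h.2 3 (by norm_num) (by rw [S_two_three]; norm_num)
    rw [S_two_three] at h3
    simp [S] at h3
  refine Nat.not_even_iff_odd.mp fun he => h.1.ne' ?_
  exact S_eq_zero_of_prime_dvd hn Nat.prime_two he.two_dvd le_rfl

lemma exists_odd_lt_mul_and_sub_two_mul_le {N q : ℕ} (hq : 2 ≤ q) (h : q * (q - 2) ≤ N) :
    ∃ u, Odd u ∧ N < q * u ∧ (q - 2) * u ≤ N := by
  set t := N / q
  obtain ⟨u, hu, htu, hut⟩ : ∃ u, Odd u ∧ t < u ∧ u ≤ t + 2 := by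
    rcases Nat.even_or_odd t with ht | ht
    · exact ⟨t + 1, ht.add_one, by omega, by omega⟩
    · exact ⟨t + 2, ht.add_even even_two, by omega, le_rfl⟩
  have hqt : q - 2 ≤ t := (Nat.le_div_iff_mul_le (by omega)).mpr (by rw [mul_comm]; exact h)
  have hlt : N < q * (t + 1) := Nat.lt_mul_div_succ N (by omega)
  have hle : q * t ≤ N := Nat.mul_div_le N q
  refine ⟨u, hu, hlt.trans_le (Nat.mul_le_mul_left q htu), ?_⟩
  calc (q - 2) * u ≤ (q - 2) * (t + 2) := Nat.mul_le_mul_left _ hut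
    _ ≤ q * t := by
      obtain ⟨s, rfl⟩ : ∃ s, q = s + 2 := ⟨q - 2, by omega⟩
      simp only [Nat.add_sub_cancel] at hqt ⊢
      nlinarith
    _ ≤ N := hle

lemma Pk_one_eq_max' {n : ℕ} (hn : n.primeFactors.Nonempty) :
    Pk 1 n = n.primeFactors.max' hn := by
  have hlen : 0 < (n.primeFactors.sort (· ≤ ·)).length := by
    rw [Finset.length_sort]; exact hn.card_pos
  rw [Finset.max'_eq_sorted_last, Pk, List.getD_eq_getElem?_getD, List.getElem?_reverse hlen,
    List.getElem?_eq_getElem (by omega), Option.getD_some]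
  simp only [Nat.sub_zero]

lemma exists_odd_gt_S_two_le_of_pow_four_dvd {n P : ℕ} (hn : Odd n) (hP : P.Prime)
    (hmax : ∀ q ∈ n.primeFactors, q ≤ P) (h4 : P ^ 4 ∣ n) :
    ∃ m, n < m ∧ Odd m ∧ S 2 m ≤ S 2 n := by
  obtain ⟨K, rfl⟩ := h4
  have hn0 : P ^ 4 * K ≠ 0 := hn.pos.ne'
  set a := P * K
  have hna : P ^ 4 * K = a * P ^ 3 := by ring
  have ha : a ≠ 0 := by rintro h; simp [hna, h] at hn0
  have hodd_a : Odd a := hn.of_dvd_nat ⟨P ^ 3, hna⟩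
  have hP2 : P ≠ 2 := by rintro rfl; exact hn.not_two_dvd_nat (dvd_mul_of_dvd_left (by norm_num) _)
  have hP3 : 3 ≤ P := by have := hP.two_le; omega
  obtain ⟨q, hq, hPq, hq2P⟩ := Nat.exists_prime_lt_and_le_two_mul P hP.ne_zero
  have hqn : ¬ q ∣ P ^ 4 * K := fun h =>
    (hmax q (Nat.mem_primeFactors.mpr ⟨hq, h, hn0⟩)).not_gt hPq
  have hqa : ¬ q ∣ a := fun h => hqn (hna ▸ dvd_mul_of_dvd_left h _)
  have hq_odd : Odd q := hq.odd_of_ne_two (by omega)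
  have hbudget : q * (q - 2) ≤ P ^ 3 := by
    obtain ⟨s, rfl⟩ : ∃ s, P = s + 2 := ⟨P - 2, by omega⟩
    calc q * (q - 2) ≤ (2 * (s + 2)) * (2 * (s + 2) - 2) := by gcongr
      _ ≤ (s + 2) ^ 3 := by
        rw [show 2 * (s + 2) - 2 = 2 * s + 2 by omega]; nlinarith [sq_nonneg s]
  obtain ⟨u, hu, hlt, hle⟩ := exists_odd_lt_mul_and_sub_two_mul_le hq.two_le hbudget
  refine ⟨a * u * q, ?_, (hodd_a.mul hu).mul hq_odd, ?_⟩
  · calc P ^ 4 * K = a * P ^ 3 := hna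
      _ < a * (q * u) := Nat.mul_lt_mul_of_pos_left hlt (Nat.pos_of_ne_zero ha)
      _ = a * u * q := by ring
  · calc S 2 (a * u * q) ≤ S 2 a * u * (q - 2) := S_mul_mul_prime_le hq ha hu.pos.ne' hqa
      _ = S 2 a * ((q - 2) * u) := by ring
      _ ≤ S 2 a * P ^ 3 := Nat.mul_le_mul_left _ hle
      _ = S 2 (P ^ 4 * K) := by rw [hna, S_mul_pow_of_dvd hP ha (dvd_mul_right P K)]

theorem stmt16 (n : ℕ) (h : SST 2 n) : ¬ (Pk 1 n) ^ 4 ∣ n := by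
  intro h4
  have hodd : Odd n := h.odd
  obtain rfl | hn1 := eq_or_ne n 1
  · simp [Pk] at h4
  have hne : n.primeFactors.Nonempty := Nat.nonempty_primeFactors.mpr (by have := hodd.pos; omega)
  rw [Pk_one_eq_max' hne] at h4
  obtain ⟨m, hnm, hm, hSm⟩ := exists_odd_gt_S_two_le_of_pow_four_dvd hodd
    (Nat.prime_of_mem_primeFactors (n.primeFactors.max'_mem hne))
    (fun q hq => n.primeFactors.le_max' q hq) h4
  exact (h.2 m hnm (S_two_pos_of_odd hm)).not_ge hSm
end
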